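/- Let T be a finite tree with a vertex v, and let i, j be vertices of T with i ≠ v and j ≠ v. Then the (i,j) entry of Q_{T,v} equals min{ dist_T(v,w) : w lies on the unique path in T from i to j }. In particular, the (i,i) entry of Q_{T,v} equals dist_T(i,v). -/

import Mathlib

/-!
In a tree `T` the 2-forests are exactly the graphs `T - e` for an edge `e`, and `T - e`
separates two vertices iff `e` lies on the path joining them. Hence `q_{i,j}` counts the edges
of the `i`–`v` path that are not on the `i`–`j` path `p`. The `i`–`v` path lies inside every
`i`–`v` walk, e.g. `p` up to a vertex `w` followed by a shortest walk from `w` to `v`, so there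
are at most `dist(v, w)` such edges; conversely, following the `v`–`i` path from `v` until it
first meets `p` uses only such edges.
-/

open SimpleGraph Filter

namespace Braess

universe u

variable {V : Type*}

/-- The number of spanning trees of `G`. -/
noncomputable def tau (G : SimpleGraph V) : ℕ :=
  Nat.card {H : SimpleGraph V // H ≤ G ∧ H.IsTree}

/-- `H` is a 2-forest (spanning forest with exactly two components) of `G`. -/
def IsTwoForest (G H : SimpleGraph V) : Prop :=
  H ≤ G ∧ H.IsAcyclic ∧ Nat.card H.ConnectedComponent = 2

/-- `f_G(i,j)`: the number of 2-forests of `G` with `i` and `j` in different components. -/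
noncomputable def fsep (G : SimpleGraph V) (i j : V) : ℕ :=
  Nat.card {H : SimpleGraph V // IsTwoForest G H ∧ ¬ H.Reachable i j}

/-- `q_{i,j}`: the number of 2-forests of `G` with `i` and `j` in one component and `v`
in the other. -/
noncomputable def qEntry (G : SimpleGraph V) (v i j : V) : ℕ :=
  Nat.card {H : SimpleGraph V // IsTwoForest G H ∧ H.Reachable i j ∧ ¬ H.Reachable i v}

/-- Degree of a vertex. -/
noncomputable def deg (G : SimpleGraph V) (i : V) : ℕ :=
  Nat.card (G.neighborSet i)

/-- Number of edges of `G`. -/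
noncomputable def edgeCount (G : SimpleGraph V) : ℕ :=
  Nat.card G.edgeSet

/-- `d_G^T F_G d_G`. -/
noncomputable def dFd (G : SimpleGraph V) : ℚ :=
  ∑ᶠ i, ∑ᶠ j, (deg G i : ℚ) * (fsep G i j : ℚ) * (deg G j : ℚ)

/-- `d_G^T f^v_G`. -/
noncomputable def dfv (G : SimpleGraph V) (v : V) : ℚ :=
  ∑ᶠ i, (deg G i : ℚ) * (fsep G i v : ℚ)

/-- `d_G^T Q_{G,v} d_G`. -/
noncomputable def dQd (G : SimpleGraph V) (v : V) : ℚ :=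
  ∑ᶠ i, ∑ᶠ j, (deg G i : ℚ) * (qEntry G v i j : ℚ) * (deg G j : ℚ)

/-- `φ_G(v) = d_G^T (2 f^v_G 𝟙^T − F_G) d_G`. -/
noncomputable def phi (G : SimpleGraph V) (v : V) : ℚ :=
  ∑ᶠ i, ∑ᶠ j, (deg G i : ℚ) * (2 * (fsep G i v : ℚ) - (fsep G i j : ℚ)) * (deg G j : ℚ)

/-- Kemeny's constant, via the combinatorial formula. -/
noncomputable def kemeny (G : SimpleGraph V) : ℚ :=
  dFd G / (4 * (edgeCount G : ℚ) * (tau G : ℚ))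

/-- Eccentricity of a vertex. -/
noncomputable def ecc (G : SimpleGraph V) (v : V) : ℕ :=
  sSup (Set.range (G.dist v))

/-- The graph `G̃(v,k₁,k₂)`, obtained from `G` by attaching at `v` two pendent paths
with `k₁` and `k₂` new vertices respectively. -/
def attach (G : SimpleGraph V) (v : V) (k₁ k₂ : ℕ) :
    SimpleGraph (V ⊕ (Fin k₁ ⊕ Fin k₂)) where
  Adj x y :=
    match x, y with
    | .inl a, .inl b => G.Adj a b
    | .inl a, .inr (.inl i) => a = v ∧ (i : ℕ) = 0
    | .inl a, .inr (.inr i) => a = v ∧ (i : ℕ) = 0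
    | .inr (.inl i), .inl b => b = v ∧ (i : ℕ) = 0
    | .inr (.inr i), .inl b => b = v ∧ (i : ℕ) = 0
    | .inr (.inl i), .inr (.inl j) => (i : ℕ) + 1 = (j : ℕ) ∨ (j : ℕ) + 1 = (i : ℕ)
    | .inr (.inr i), .inr (.inr j) => (i : ℕ) + 1 = (j : ℕ) ∨ (j : ℕ) + 1 = (i : ℕ)
    | .inr (.inl _), .inr (.inr _) => False
    | .inr (.inr _), .inr (.inl _) => False
  symm := by
    constructor
    rintro (a | (i | i)) (b | (j | j)) h
    · exact G.symm.symm _ _ h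
    · exact h
    · exact h
    · exact h
    · exact h.symm
    · exact h.elim
    · exact h
    · exact h.elim
    · exact h.symm
  loopless := by
    constructor
    rintro (a | (i | i)) h
    · exact G.loopless.irrefl a h
    · omega
    · omega

/-- The far endpoint of the first attached path (it is `v` itself when `k₁ = 0`). -/
def farEnd₁ (v : V) (k₁ k₂ : ℕ) : V ⊕ (Fin k₁ ⊕ Fin k₂) :=
  if h : 0 < k₁ then .inr (.inl ⟨k₁ - 1, by omega⟩) else .inl v

/-- The far endpoint of the second attached path (it is `v` itself when `k₂ = 0`). -/
def farEnd₂ (v : V) (k₁ k₂ : ℕ) : V ⊕ (Fin k₁ ⊕ Fin k₂) :=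
  if h : 0 < k₂ then .inr (.inr ⟨k₂ - 1, by omega⟩) else .inl v

/-- The graph `Ĝ(v,k₁,k₂)`: `G̃(v,k₁,k₂)` together with the extra edge joining the far
endpoints of the two attached paths. -/
def attachEdge (G : SimpleGraph V) (v : V) (k₁ k₂ : ℕ) :
    SimpleGraph (V ⊕ (Fin k₁ ⊕ Fin k₂)) :=
  attach G v k₁ k₂ ⊔ fromEdgeSet {s(farEnd₁ v k₁ k₂, farEnd₂ v k₁ k₂)}

/-- `G` is `(v,k₁,k₂)`-paradoxical. -/
def IsParadoxical (G : SimpleGraph V) (v : V) (k₁ k₂ : ℕ) : Prop :=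
  kemeny (attach G v k₁ k₂) < kemeny (attachEdge G v k₁ k₂)

/-- `φ₁(k₁,k₂)`. -/
noncomputable def kphi₁ (k₁ k₂ : ℕ) : ℚ :=
  -(2 / 3) * ((k₁ : ℚ) + k₂) * ((k₁ : ℚ) + k₂ - 1) + 2 * k₁ * k₂

/-- `φ₂(k₁,k₂)`. -/
noncomputable def kphi₂ (k₁ k₂ : ℕ) : ℚ :=
  -((k₁ : ℚ) + k₂) * (5 * ((k₁ : ℚ) + k₂) ^ 2 - ((k₁ : ℚ) + k₂) - 1)
    + 12 * k₁ * k₂ * ((k₁ : ℚ) + k₂ + 1)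

/-- `φ₃(k₁,k₂)`. -/
noncomputable def kphi₃ (k₁ k₂ : ℕ) : ℚ :=
  -((k₁ : ℚ) + k₂ + 1) * ((k₁ : ℚ) + k₂) * ((k₁ : ℚ) + k₂ - 1) ^ 2

/-- `Φ_G(v,k₁,k₂)`, with `k = k₁ + k₂ + 1`. -/
noncomputable def Phi (G : SimpleGraph V) (v : V) (k₁ k₂ : ℕ) : ℚ :=
  ((k₁ : ℚ) + k₂ + 1) * phi G v
    + 4 * (edgeCount G : ℚ) ^ 2 * (tau G : ℚ) * ((k₁ : ℚ) + k₂ + 1) * kphi₁ k₁ k₂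
    + (2 * (edgeCount G : ℚ) * (tau G : ℚ) * ((k₁ : ℚ) + k₂ + 1) / 3) * kphi₂ k₁ k₂
    + (2 * (tau G : ℚ) * ((k₁ : ℚ) + k₂ + 1) / 3) * kphi₃ k₁ k₂

/-- A sequence of graphs with specified vertices is asymptotically paradoxical. -/
def AsympParadoxical {W : ℕ → Type u} (G : ∀ n, SimpleGraph (W n)) (v : ∀ n, W n) : Prop :=
  ∀ l₁ l₂ : ℕ, 2 ≤ l₁ + l₂ → ∃ N, ∀ n ≥ N, IsParadoxical (G n) (v n) l₁ l₂

section Glue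

variable {V₁ V₂ : Type*}

/-- The graph obtained from `H₁` and `H₂` by identifying `v₁ ∈ V(H₁)` and `v₂ ∈ V(H₂)` as a
single vertex (represented by `Sum.inl v₁`). -/
def glue (H₁ : SimpleGraph V₁) (H₂ : SimpleGraph V₂) (v₁ : V₁) (v₂ : V₂) :
    SimpleGraph (V₁ ⊕ {x : V₂ // x ≠ v₂}) where
  Adj x y :=
    match x, y with
    | .inl a, .inl b => H₁.Adj a b
    | .inl a, .inr b => a = v₁ ∧ H₂.Adj v₂ b.1
    | .inr a, .inl b => b = v₁ ∧ H₂.Adj v₂ a.1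
    | .inr a, .inr b => H₂.Adj a.1 b.1
  symm := by
    constructor
    rintro (a | a) (b | b) h
    · exact H₁.symm.symm _ _ h
    · exact h
    · exact h
    · exact H₂.symm.symm _ _ h
  loopless := by
    constructor
    rintro (a | a) h
    · exact H₁.loopless.irrefl a h
    · exact H₂.loopless.irrefl a.1 h

/-- The canonical map from `V₂` to the vertex set of the glued graph. -/
def glueRight [DecidableEq V₂] (v₁ : V₁) (v₂ : V₂) (x : V₂) : V₁ ⊕ {y : V₂ // y ≠ v₂} :=
  if h : x = v₂ then .inl v₁ else .inr ⟨x, h⟩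

end Glue

section MultiGlue

variable {ι : Type*} {W : ι → Type*} {V₀ : Type*}

/-- The graph obtained from the family `H i` and `G` by identifying all the vertices `w i`
and `v` as a single vertex (represented by `Sum.inl v`). -/
def multiGlue (H : ∀ i, SimpleGraph (W i)) (w : ∀ i, W i)
    (G : SimpleGraph V₀) (v : V₀) :
    SimpleGraph (V₀ ⊕ Σ i, {x : W i // x ≠ w i}) where
  Adj x y :=
    match x, y with
    | .inl a, .inl b => G.Adj a b
    | .inl a, .inr ⟨i, b⟩ => a = v ∧ (H i).Adj (w i) b.1
    | .inr ⟨i, a⟩, .inl b => b = v ∧ (H i).Adj (w i) a.1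
    | .inr ⟨i, a⟩, .inr ⟨j, b⟩ => ∃ h : i = j, (H j).Adj (h ▸ a).1 b.1
  symm := by
    constructor
    rintro (a | ⟨i, a⟩) (b | ⟨j, b⟩) h
    · exact G.symm.symm _ _ h
    · exact h
    · exact h
    · obtain ⟨rfl, h⟩ := h
      exact ⟨rfl, (H i).symm.symm _ _ h⟩
  loopless := by
    constructor
    rintro (a | ⟨i, a⟩) h
    · exact G.loopless.irrefl a h
    · obtain ⟨h', h⟩ := h
      exact (H i).loopless.irrefl a.1 h

end MultiGlue

/-- The broom `𝓑_{n,k}`: a path on the `k` vertices `0, 1, …, k−1` together with `n − k`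
pendent vertices (the vertices `k, …, n−1`) all adjacent to the vertex `0`. -/
def broomGraph (n k : ℕ) : SimpleGraph (Fin n) where
  Adj i j :=
    ((i : ℕ) + 1 = (j : ℕ) ∧ (j : ℕ) < k) ∨ ((j : ℕ) + 1 = (i : ℕ) ∧ (i : ℕ) < k) ∨
      ((i : ℕ) = 0 ∧ k ≤ (j : ℕ) ∧ i ≠ j) ∨ ((j : ℕ) = 0 ∧ k ≤ (i : ℕ) ∧ i ≠ j)
  symm := by
    constructor
    intro i j h
    tauto
  loopless := by
    constructor
    rintro i (⟨h, -⟩ | ⟨h, -⟩ | ⟨-, -, h⟩ | ⟨-, -, h⟩)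
    · omega
    · omega
    · exact h rfl
    · exact h rfl

section Branch

variable (G : SimpleGraph V) (v : V)

/-- The vertex set of the branch of `G` at `v` corresponding to the connected component `c`
of `G − v`. -/
def branchSet (c : (G.induce {x : V | x ≠ v}).ConnectedComponent) : Set V :=
  insert v {x : V | ∃ h : x ≠ v,
    (G.induce {x : V | x ≠ v}).connectedComponentMk ⟨x, h⟩ = c}

/-- The vertex set of the complementary part `G'_c`: everything outside the branch at `c`,
together with `v`. -/
def cobranchSet (c : (G.induce {x : V | x ≠ v}).ConnectedComponent) : Set V :=
  insert v {x : V | ∃ h : x ≠ v,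
    (G.induce {x : V | x ≠ v}).connectedComponentMk ⟨x, h⟩ ≠ c}

end Branch

section Sequence

/-- `Tnew` is obtained from `Told` by adding one new pendent vertex (the last vertex). -/
def AddPendentStep {n : ℕ} (Told : SimpleGraph (Fin (n + 1)))
    (Tnew : SimpleGraph (Fin (n + 2))) : Prop :=
  (∀ a b : Fin (n + 1), Tnew.Adj a.castSucc b.castSucc ↔ Told.Adj a b) ∧
    ∃ u : Fin (n + 1), ∀ x : Fin (n + 1), Tnew.Adj (Fin.last (n + 1)) x.castSucc ↔ x = u

/-- `Tnew` is obtained from `Told` by subdividing one edge, the new (last) vertex being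
placed in the middle of it. -/
def SubdivideStep {n : ℕ} (Told : SimpleGraph (Fin (n + 1)))
    (Tnew : SimpleGraph (Fin (n + 2))) : Prop :=
  ∃ a b : Fin (n + 1), Told.Adj a b ∧
    (∀ x y : Fin (n + 1), Tnew.Adj x.castSucc y.castSucc ↔ (Told.Adj x y ∧ s(x, y) ≠ s(a, b))) ∧
    (∀ x : Fin (n + 1), Tnew.Adj (Fin.last (n + 1)) x.castSucc ↔ (x = a ∨ x = b))

/-- The vertex set of the branch of `T` at the vertex `0` containing the vertex `w`. -/
def branchSetAt {m : ℕ} (T : SimpleGraph (Fin (m + 1))) (w : Fin (m + 1)) :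
    Set (Fin (m + 1)) :=
  insert 0 {y : Fin (m + 1) | ∃ (hy : y ≠ 0) (hw : w ≠ 0),
    (T.induce {z : Fin (m + 1) | z ≠ 0}).Reachable ⟨y, hy⟩ ⟨w, hw⟩}

/-- The eccentricity of the vertex `0` in the branch of `T` at `0` containing `w`. -/
noncomputable def branchEcc {m : ℕ} (T : SimpleGraph (Fin (m + 1))) (w : Fin (m + 1)) : ℕ :=
  ecc (T.induce (branchSetAt T w)) ⟨0, Set.mem_insert _ _⟩

/-- `f = Θ(g)` (big Theta) for `ℕ`-valued sequences. -/
def IsBigTheta (f g : ℕ → ℕ) : Prop :=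
  ∃ c₁ c₂ : ℚ, 0 < c₁ ∧ 0 < c₂ ∧
    ∃ N, ∀ n ≥ N, c₁ * (g n : ℚ) ≤ (f n : ℚ) ∧ (f n : ℚ) ≤ c₂ * (g n : ℚ)

/-- `β_n`: the number of branches of `T n` at the vertex `0` whose eccentricity function (in
later members of the sequence, under the consistent indexing that tracks each branch by the
vertices it contains) is `Θ` of the eccentricity of `0`. -/
noncomputable def beta (T : ∀ n : ℕ, SimpleGraph (Fin (n + 1))) (n : ℕ) : ℕ :=
  Nat.card {c : ((T n).induce {z : Fin (n + 1) | z ≠ 0}).ConnectedComponent //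
    ∃ (x : Fin (n + 1)) (hx : x ≠ 0),
      ((T n).induce {z : Fin (n + 1) | z ≠ 0}).connectedComponentMk ⟨x, hx⟩ = c ∧
      IsBigTheta
        (fun m => if h : n ≤ m then branchEcc (T m) (Fin.castLE (by omega) x) else 0)
        (fun m => ecc (T m) 0)}

end Sequence

end Braess

namespace SimpleGraph

variable {V : Type*} {G H : SimpleGraph V}

theorem IsAcyclic.edges_subset_edges_of_isPath (hG : G.IsAcyclic) {u v : V} {p : G.Walk u v}
    (hp : p.IsPath) (q : G.Walk u v) : p.edges ⊆ q.edges := by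
  classical
  have hpq : p = q.bypass :=
    congrArg Subtype.val ((hG.subsingleton_path u v).elim ⟨p, hp⟩ ⟨q.bypass, q.bypass_isPath⟩)
  exact hpq ▸ q.edges_bypass_subset_edges

theorem IsAcyclic.reachable_deleteEdges_iff (hG : G.IsAcyclic) {u v : V} {p : G.Walk u v}
    (hp : p.IsPath) (e : Sym2 V) : (G.deleteEdges {e}).Reachable u v ↔ e ∉ p.edges := by
  refine ⟨fun ⟨q⟩ he => ?_, not_imp_comm.mp p.mem_edges_of_not_reachable_deleteEdges⟩
  have hq := hG.edges_subset_edges_of_isPath hp (q.mapLe (deleteEdges_le _)) he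
  rw [Walk.edges_mapLe_eq_edges] at hq
  simpa using q.edges_subset_edgeSet hq

theorem Reachable.deleteEdges_singleton_or {z a : V} (h : G.Reachable z a) (b : V) :
    (G.deleteEdges {s(a, b)}).Reachable z a ∨ (G.deleteEdges {s(a, b)}).Reachable z b := by
  obtain ⟨q⟩ := h
  induction q with
  | nil => exact .inl (.refl _)
  | @cons x y c hxy _ ih =>
    by_cases he : s(x, y) = s(c, b)
    · rcases Sym2.eq_iff.mp he with ⟨rfl, -⟩ | ⟨rfl, -⟩
      exacts [.inl .rfl, .inr .rfl]
    · have hxy' : (G.deleteEdges {s(c, b)}).Adj x y := by simpa [he] using hxy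
      exact ih.imp hxy'.reachable.trans hxy'.reachable.trans

theorem IsTree.card_connectedComponent_deleteEdges (hG : G.IsTree) {e : Sym2 V}
    (he : e ∈ G.edgeSet) : Nat.card (G.deleteEdges {e}).ConnectedComponent = 2 := by
  induction e using Sym2.ind with | _ a b => ?_
  have hbridge : ¬ (G.deleteEdges {s(a, b)}).Reachable a b :=
    isAcyclic_iff_forall_adj_isBridge.mp hG.isAcyclic he
  refine Nat.card_eq_two_iff.mpr ⟨_, _, mt ConnectedComponent.exact hbridge, ?_⟩
  refine Set.eq_univ_of_forall fun c => c.ind fun z => ?_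
  exact ((hG.connected z a).deleteEdges_singleton_or b).imp
    ConnectedComponent.sound ConnectedComponent.sound

theorem Reachable.of_le_of_card_connectedComponent_eq [Finite V] (hle : H ≤ G)
    (hcard : Nat.card G.ConnectedComponent = Nat.card H.ConnectedComponent) {x y : V}
    (hxy : G.Reachable x y) : H.Reachable x y := by
  have hinj := ((ConnectedComponent.surjective_map_ofLE hle).bijective_of_nat_card_le
    hcard.ge).injective
  exact ConnectedComponent.exact (hinj (by simpa using ConnectedComponent.sound hxy))

theorem le_deleteEdges_singleton {e : Sym2 V} (hle : H ≤ G) (he : e ∉ H.edgeSet) :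
    H ≤ G.deleteEdges {e} := fun _ _ hxy =>
  (deleteEdges_adj ..).mpr ⟨hle hxy, fun h => he (Set.mem_singleton_iff.mp h ▸ hxy)⟩

theorem deleteEdges_singleton_injOn : Set.InjOn (fun e => G.deleteEdges {e}) G.edgeSet := by
  intro e _ e' he' h
  by_contra hne
  have he'e : e' ∈ (G.deleteEdges {e}).edgeSet := by
    simpa [edgeSet_deleteEdges] using And.intro he' (Ne.symm hne)
  simp_all [edgeSet_deleteEdges]

theorem Walk.exists_walk_length_le_length_filter_notMem_edges [DecidableEq V] {u x y z : V}
    (p : G.Walk y z) (q : G.Walk u x) (hx : x ∈ p.support) :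
    ∃ w ∈ p.support, ∃ r : G.Walk u w, r.length ≤ (q.edges.filter (· ∉ p.edges)).length := by
  induction q with
  | nil => exact ⟨_, hx, .nil, by simp⟩
  | @cons u u' _ huu' q ih =>
    by_cases hu : u ∈ p.support
    · exact ⟨u, hu, .nil, by simp⟩
    obtain ⟨w, hw, r, hr⟩ := ih hx
    have hnot : s(u, u') ∉ p.edges := fun h => hu (p.fst_mem_support_of_mem_edges h)
    exact ⟨w, hw, .cons huu' r, by simpa [hnot] using hr⟩

end SimpleGraph

namespace Braess

open Finset

variable {V : Type*} {T : SimpleGraph V}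

theorem isTwoForest_iff_of_isTree [Finite V] (hT : T.IsTree) {H : SimpleGraph V} :
    IsTwoForest T H ↔ ∃ e ∈ T.edgeSet, H = T.deleteEdges {e} := by
  constructor
  · rintro ⟨hle, -, hcard⟩
    obtain ⟨e, heT, heH⟩ : ∃ e ∈ T.edgeSet, e ∉ H.edgeSet := by
      by_contra! h
      have hHT := ConnectedComponent.card_le_card_of_le (edgeSet_subset_edgeSet.mp h)
      have := Finite.card_le_one_iff_subsingleton.mpr
        hT.connected.preconnected.subsingleton_connectedComponent
      omega
    have hcard' :
        Nat.card (T.deleteEdges {e}).ConnectedComponent = Nat.card H.ConnectedComponent :=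
      (hT.card_connectedComponent_deleteEdges heT).trans hcard.symm
    refine ⟨e, heT, le_antisymm (le_deleteEdges_singleton hle heH) fun c d hcd => ?_⟩
    -- `H` and `T - e` have the same components, so an edge of `T - e` missing from `H` would
    -- be a bridge of `T` whose endpoints are still joined in `H`.
    by_contra hnot
    have hsep := le_deleteEdges_singleton hle (e := s(c, d)) hnot
    exact isAcyclic_iff_forall_adj_isBridge.mp hT.isAcyclic (deleteEdges_adj .. |>.mp hcd).1
      (((hcd.reachable.of_le_of_card_connectedComponent_eq
        (le_deleteEdges_singleton hle heH) hcard')).mono hsep)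
  · rintro ⟨e, he, rfl⟩
    exact ⟨deleteEdges_le _, hT.isAcyclic.anti (deleteEdges_le _),
      hT.card_connectedComponent_deleteEdges he⟩

theorem card_isTwoForest_and_of_isTree [Finite V] (hT : T.IsTree) (P : SimpleGraph V → Prop) :
    Nat.card {H // IsTwoForest T H ∧ P H} =
      Nat.card {e // e ∈ T.edgeSet ∧ P (T.deleteEdges {e})} := by
  refine (Nat.card_congr (Equiv.ofBijective
    (fun e => ⟨T.deleteEdges {e.1}, (isTwoForest_iff_of_isTree hT).mpr ⟨e.1, e.2.1, rfl⟩, e.2.2⟩)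
    ⟨fun e e' h => ?_, fun H => ?_⟩)).symm
  · exact Subtype.ext (deleteEdges_singleton_injOn e.2.1 e'.2.1 (congrArg Subtype.val h))
  · obtain ⟨e, he, hH⟩ := (isTwoForest_iff_of_isTree hT).mp H.2.1
    exact ⟨⟨e, he, hH ▸ H.2.2⟩, Subtype.ext hH.symm⟩

theorem qEntry_eq_card_of_isTree [Finite V] [DecidableEq V] (hT : T.IsTree) {v i j : V}
    {p : T.Walk i j} (hp : p.IsPath) {q : T.Walk i v} (hq : q.IsPath) :
    qEntry T v i j = #{e ∈ q.edges.toFinset | e ∉ p.edges} := by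
  rw [qEntry, card_isTwoForest_and_of_isTree hT, ← Nat.card_eq_finsetCard]
  refine Nat.card_congr (Equiv.subtypeEquivRight fun e => ?_)
  rw [hT.isAcyclic.reachable_deleteEdges_iff hp, hT.isAcyclic.reachable_deleteEdges_iff hq]
  simp only [not_not, mem_filter, List.mem_toFinset]
  exact ⟨fun h => ⟨h.2.2, h.2.1⟩, fun h => ⟨q.edges_subset_edgeSet h.1, h.2, h.1⟩⟩

theorem card_edges_filter_le_dist_of_isTree [DecidableEq V] (hT : T.IsTree) {v i j w : V}
    (p : T.Walk i j) (hw : w ∈ p.support) {q : T.Walk i v} (hq : q.IsPath) :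
    #{e ∈ q.edges.toFinset | e ∉ p.edges} ≤ T.dist v w := by
  obtain ⟨r, hr⟩ := hT.connected.exists_walk_length_eq_dist w v
  have hsub : q.edges ⊆ ((p.takeUntil w hw).append r).edges :=
    hT.isAcyclic.edges_subset_edges_of_isPath hq _
  calc #{e ∈ q.edges.toFinset | e ∉ p.edges}
      ≤ r.edges.toFinset.card := by
        refine card_le_card fun e he => ?_
        simp only [mem_filter, List.mem_toFinset] at he ⊢
        rcases List.mem_append.mp (Walk.edges_append .. ▸ hsub he.1) with h | h
        exacts [absurd (p.edges_takeUntil_subset_edges hw h) he.2, h]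
    _ ≤ r.length := r.length_edges ▸ List.toFinset_card_le _
    _ = T.dist v w := hr.trans (dist_comm ..)

theorem exists_dist_le_card_edges_filter [DecidableEq V] {v i j : V} (p : T.Walk i j)
    {q : T.Walk i v} (hq : q.IsPath) :
    ∃ w ∈ p.support, T.dist v w ≤ #{e ∈ q.edges.toFinset | e ∉ p.edges} := by
  obtain ⟨w, hw, r, hr⟩ := p.exists_walk_length_le_length_filter_notMem_edges q.reverse
    p.start_mem_support
  refine ⟨w, hw, (dist_le r).trans (hr.trans_eq ?_)⟩
  rw [Walk.edges_reverse, List.filter_reverse, List.length_reverse,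
    ← List.toFinset_card_of_nodup (hq.isTrail.edges_nodup.filter _), List.toFinset_filter]
  simp

theorem qEntry_eq_sInf_of_isTree [Finite V] (hT : T.IsTree) {v i j : V} (p : T.Walk i j)
    (hp : p.IsPath) : qEntry T v i j = sInf {d : ℕ | ∃ w ∈ p.support, T.dist v w = d} := by
  classical
  obtain ⟨q, hq, -⟩ := hT.existsUnique_path i v
  rw [qEntry_eq_card_of_isTree hT hp hq]
  obtain ⟨w, hw, hle⟩ := exists_dist_le_card_edges_filter p hq
  symm
  refine IsLeast.csInf_eq ⟨⟨w, hw, le_antisymm hle ?_⟩, ?_⟩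
  · exact card_edges_filter_le_dist_of_isTree hT p hw hq
  · rintro _ ⟨w', hw', rfl⟩
    exact card_edges_filter_le_dist_of_isTree hT p hw' hq

theorem stmt_11_general {V : Type*} [Fintype V] (T : SimpleGraph V) (hT : T.IsTree)
    (v i j : V) :
    (∀ p : T.Path i j,
      qEntry T v i j = sInf {d : ℕ | ∃ w ∈ (p : T.Walk i j).support, T.dist v w = d}) ∧
    qEntry T v i i = T.dist i v := by
  refine ⟨fun p => qEntry_eq_sInf_of_isTree hT p.1 p.2, ?_⟩
  rw [qEntry_eq_sInf_of_isTree hT .nil .nil, dist_comm]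
  simp

/-- in a tree, `q_{i,j}` is the minimal distance from `v` to the unique
`i`–`j` path, and `q_{i,i} = dist(i,v)`. -/
theorem stmt_11 {V : Type*} [Fintype V] (T : SimpleGraph V) (hT : T.IsTree)
    (v i j : V) (hi : i ≠ v) (hj : j ≠ v) :
    (∀ p : T.Path i j,
      qEntry T v i j = sInf {d : ℕ | ∃ w ∈ (p : T.Walk i j).support, T.dist v w = d}) ∧
    qEntry T v i i = T.dist i v :=
  stmt_11_general T hT v i j

end Braess
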